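/- Let γ ∈ (0,1), b > 0, d > 0, a < 0, and define g(k) = 1/γ − (1/γ²)·|k|·coth(|k|) − (a/γ)·k² + (k²/γ³)·coth²(|k|) for real k ≠ 0, and α(k) = sqrt( g(k)·(1 + d k²) / ( (1 − γ)·(1 + b k²) ) ). Then there exist positive constants C₁, C₂ such that C₁·sqrt(1 + k²) ≤ α(k) ≤ C₂·sqrt(1 + k²) for all real k ≠ 0; that is, α is an elliptic symbol of order 1. -/

import Mathlib

/-- The hyperbolic cotangent. -/
noncomputable def coth (y : ℝ) : ℝ := Real.cosh y / Real.sinh y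

/-- The coefficient function `g` of the linearized Boussinesq/Full dispersion system. -/
noncomputable def g (γ a k : ℝ) : ℝ :=
  1 / γ - (1 / γ ^ 2) * (|k| * coth |k|) - (a / γ) * k ^ 2 + (k ^ 2 / γ ^ 3) * (coth |k|) ^ 2

/-- The eigenvector ratio `α(k)` in the case `b, d > 0`, `a < 0`, `c = 0`. -/
noncomputable def alphaSym (γ a b d k : ℝ) : ℝ :=
  Real.sqrt (g γ a k * (1 + d * k ^ 2) / ((1 - γ) * (1 + b * k ^ 2)))

lemma one_le_coth {x : ℝ} (hx : 0 < x) : 1 ≤ coth x := by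
  rw [coth, le_div_iff₀ (Real.sinh_pos_iff.2 hx), one_mul]
  exact (Real.sinh_lt_cosh x).le

lemma mul_coth_le {x : ℝ} (hx : 0 < x) : x * coth x ≤ 1 + x := by
  have hs := Real.sinh_pos_iff.2 hx
  rw [coth, ← mul_div_assoc, div_le_iff₀ hs]
  rw [Real.cosh_eq, Real.sinh_eq]
  have h1 := Real.add_one_le_exp (2 * x)
  have h2 : Real.exp x * Real.exp x = Real.exp (2 * x) := by
    rw [← Real.exp_add]; ring_nf
  have h3 : Real.exp (-x) * Real.exp x = 1 := by
    rw [← Real.exp_add]; simp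
  have h4 := Real.exp_pos (-x)
  have h5 := Real.exp_pos x
  nlinarith [mul_pos h4 h5]

set_option maxHeartbeats 800000 in
/-- In the Boussinesq/Full dispersion case `b, d > 0`, `a < 0`, `c = 0`, the eigenvector
ratio `α` is an elliptic symbol of order `1`:
`C₁ √(1 + k²) ≤ α(k) ≤ C₂ √(1 + k²)` for positive constants `C₁, C₂`. -/
theorem alpha_order_one (γ a b d : ℝ) (hγ : γ ∈ Set.Ioo (0 : ℝ) 1)
    (hb : 0 < b) (hd : 0 < d) (ha : a < 0) :
    ∃ C₁ > 0, ∃ C₂ > 0, ∀ k : ℝ, k ≠ 0 →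
      C₁ * Real.sqrt (1 + k ^ 2) ≤ alphaSym γ a b d k ∧
        alphaSym γ a b d k ≤ C₂ * Real.sqrt (1 + k ^ 2) := by
  obtain ⟨hγ0, hγ1⟩ := hγ
  have h1γ : 0 < 1 - γ := by linarith
  set m : ℝ := min 1 (d / b) with hmdef
  set M : ℝ := max 1 (d / b) with hMdef
  have hm : 0 < m := lt_min one_pos (div_pos hd hb)
  have hM : 0 < M := hm.trans_le min_le_max
  set Cg : ℝ := (γ ^ 2 + 2 + (-a) * γ ^ 2) / γ ^ 3 with hCgdef
  have hCg : 0 < Cg := div_pos (by nlinarith [sq_nonneg γ, mul_pos (neg_pos.2 ha) (pow_pos hγ0 2)]) (pow_pos hγ0 3)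
  have hmpos : (0:ℝ) < 1 / (2 * γ) * m / (1 - γ) := div_pos (mul_pos (by positivity) hm) h1γ
  refine ⟨Real.sqrt (1 / (2 * γ) * m / (1 - γ)), Real.sqrt_pos.2 hmpos,
    Real.sqrt (Cg * M / (1 - γ)), Real.sqrt_pos.2 (div_pos (mul_pos hCg hM) h1γ), ?_⟩
  intro k hk
  set x : ℝ := |k| with hxdef
  have hx : 0 < x := abs_pos.2 hk
  have hc1 : 1 ≤ coth x := one_le_coth hx
  have hc2 : x * coth x ≤ 1 + x := mul_coth_le hx
  have hk2 : k ^ 2 = x ^ 2 := (sq_abs k).symm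
  set t : ℝ := x * coth x with htdef
  have ht : x ≤ t := by nlinarith
  have hgeq : g γ a k = (γ ^ 2 - γ * t + t ^ 2 - a * γ ^ 2 * x ^ 2) / γ ^ 3 := by
    rw [g, hk2]
    field_simp
    ring
  have ht0 : 0 < t := hx.trans_le ht
  have hN : γ ^ 2 / 2 * (1 + x ^ 2) ≤ γ ^ 2 - γ * t + t ^ 2 - a * γ ^ 2 * x ^ 2 := by
    nlinarith [sq_nonneg (t - γ), mul_nonneg (sub_nonneg.2 ht) (by positivity : (0:ℝ) ≤ t + x),
      mul_nonneg (mul_nonneg (neg_pos.2 ha).le (sq_nonneg γ)) (sq_nonneg x),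
      mul_nonneg (by nlinarith : (0:ℝ) ≤ 1 - γ ^ 2) (sq_nonneg x)]
  have hglb : 1 / (2 * γ) * (1 + x ^ 2) ≤ g γ a k := by
    rw [hgeq, le_div_iff₀ (by positivity)]
    have heq : 1 / (2 * γ) * (1 + x ^ 2) * γ ^ 3 = γ ^ 2 / 2 * (1 + x ^ 2) := by
      field_simp
    linarith [heq.le, heq.ge]
  have hN2 : γ ^ 2 - γ * t + t ^ 2 - a * γ ^ 2 * x ^ 2 ≤ (γ ^ 2 + 2 + (-a) * γ ^ 2) * (1 + x ^ 2) := by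
    nlinarith [mul_pos hγ0 ht0, sq_nonneg (x - 1), mul_nonneg (sub_nonneg.2 hc2) (by positivity : (0:ℝ) ≤ 1 + x + t),
      mul_nonneg (mul_nonneg (neg_pos.2 ha).le (sq_nonneg γ)) (sq_nonneg x),
      mul_nonneg (sq_nonneg γ) (sq_nonneg x)]
  have hgub : g γ a k ≤ Cg * (1 + x ^ 2) := by
    rw [hgeq, hCgdef, div_mul_eq_mul_div, div_le_div_iff₀ (by positivity) (by positivity)]
    nlinarith [mul_le_mul_of_nonneg_right hN2 (pow_pos hγ0 3).le]
  have hgpos : 0 < g γ a k := lt_of_lt_of_le (by positivity) hglb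
  have hbx : 0 < 1 + b * x ^ 2 := by positivity
  have hdx : 0 < 1 + d * x ^ 2 := by positivity
  have hmb : m * (1 + b * x ^ 2) ≤ 1 + d * x ^ 2 := by
    have h1 : m ≤ 1 := min_le_left _ _
    have h2 : m * b ≤ d := by
      have := min_le_right 1 (d / b)
      calc m * b ≤ d / b * b := by nlinarith
        _ = d := by field_simp
    nlinarith [sq_nonneg x]
  have hMb : 1 + d * x ^ 2 ≤ M * (1 + b * x ^ 2) := by
    have h1 : (1 : ℝ) ≤ M := le_max_left _ _
    have h2 : d ≤ M * b := by
      have := le_max_right 1 (d / b)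
      calc d = d / b * b := by field_simp
        _ ≤ M * b := by nlinarith
    nlinarith [sq_nonneg x]
  -- bounds on the argument of sqrt
  set A : ℝ := g γ a k * (1 + d * k ^ 2) / ((1 - γ) * (1 + b * k ^ 2)) with hAdef
  have hAlb : 1 / (2 * γ) * m / (1 - γ) * (1 + x ^ 2) ≤ A := by
    rw [hAdef, hk2, le_div_iff₀ (by positivity)]
    have key : 1 / (2 * γ) * m * (1 + x ^ 2) * (1 + b * x ^ 2) ≤ g γ a k * (1 + d * x ^ 2) := by
      calc 1 / (2 * γ) * m * (1 + x ^ 2) * (1 + b * x ^ 2)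
          = (1 / (2 * γ) * (1 + x ^ 2)) * (m * (1 + b * x ^ 2)) := by ring
        _ ≤ g γ a k * (1 + d * x ^ 2) :=
          mul_le_mul hglb hmb (by positivity) hgpos.le
    calc 1 / (2 * γ) * m / (1 - γ) * (1 + x ^ 2) * ((1 - γ) * (1 + b * x ^ 2))
        = 1 / (2 * γ) * m * (1 + x ^ 2) * (1 + b * x ^ 2) * ((1 - γ) / (1 - γ)) := by ring
      _ = 1 / (2 * γ) * m * (1 + x ^ 2) * (1 + b * x ^ 2) := by
          rw [div_self h1γ.ne', mul_one]
      _ ≤ g γ a k * (1 + d * x ^ 2) := key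
  have hAub : A ≤ Cg * M / (1 - γ) * (1 + x ^ 2) := by
    rw [hAdef, hk2, div_le_iff₀ (by positivity)]
    have key : g γ a k * (1 + d * x ^ 2) ≤ Cg * M * (1 + x ^ 2) * (1 + b * x ^ 2) := by
      calc g γ a k * (1 + d * x ^ 2)
          ≤ (Cg * (1 + x ^ 2)) * (M * (1 + b * x ^ 2)) :=
            mul_le_mul hgub hMb hdx.le (by positivity)
        _ = Cg * M * (1 + x ^ 2) * (1 + b * x ^ 2) := by ring
    calc g γ a k * (1 + d * x ^ 2) ≤ Cg * M * (1 + x ^ 2) * (1 + b * x ^ 2) := key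
      _ = Cg * M / (1 - γ) * (1 + x ^ 2) * ((1 - γ) * (1 + b * x ^ 2)) := by
          field_simp
  have h1k : (1 : ℝ) + k ^ 2 = 1 + x ^ 2 := by rw [hk2]
  constructor
  · rw [alphaSym, ← hAdef, h1k, ← Real.sqrt_mul (by positivity)]
    exact Real.sqrt_le_sqrt hAlb
  · rw [alphaSym, ← hAdef, h1k, ← Real.sqrt_mul (by positivity)]
    exact Real.sqrt_le_sqrt hAub
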